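/- For three mutually tangent circles of radii e^{u1}, e^{u2}, e^{u3}, the inner angle function Θ(x1,x2) (with x1 = u2−u1, x2 = u3−u1) satisfies: if (x1, x2) is replaced along the straight segment f(t) = ((1−t)·a + t·b) for a, b ∈ ℝ², then Θ(b) − Θ(a) = ∫₀¹ ∇Θ(f(t)) · (b − a) dt, with both partial derivatives of Θ strictly positive everywhere; consequently Θ is strictly increasing in each variable. -/

import Mathlib

/-!
Writing `σ` for the logistic function `sigmoid x = eˣ / (1 + eˣ)`, the law-of-cosines quotient
in `Θ` simplifies to `1 - 2 σ(x₁) σ(x₂)`. Since `σ` takes values in `(0, 1)` and is strictly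
increasing, this quotient stays in `(-1, 1)`, where `arccos` is smooth with negative derivative,
and it strictly decreases in each variable. Hence `Θ` is smooth with positive partial
derivatives, and the integral formula is the fundamental theorem of calculus along the segment.
-/

open Real

/-- The angle function `Θ` as a function on `ℝ × ℝ`. -/
noncomputable def ThetaP (p : ℝ × ℝ) : ℝ :=
  Real.arccos (((1 + Real.exp p.1) ^ 2 + (1 + Real.exp p.2) ^ 2 -
      (Real.exp p.1 + Real.exp p.2) ^ 2) /
    (2 * (1 + Real.exp p.1) * (1 + Real.exp p.2)))

open Set

theorem ContDiff.sub_eq_integral_fderiv_segment {E F : Type*} [NormedAddCommGroup E]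
    [NormedSpace ℝ E] [NormedAddCommGroup F] [NormedSpace ℝ F] [CompleteSpace F] {f : E → F}
    (hf : ContDiff ℝ 1 f) (a b : E) :
    f b - f a = ∫ t in (0 : ℝ)..1, fderiv ℝ f (a + t • (b - a)) (b - a) := by
  have hseg (t : ℝ) : HasDerivAt (fun t : ℝ => a + t • (b - a)) (b - a) t := by
    simpa using ((hasDerivAt_id t).smul_const (b - a)).const_add a
  have hderiv (t : ℝ) : HasDerivAt (fun t : ℝ => f (a + t • (b - a)))
      (fderiv ℝ f (a + t • (b - a)) (b - a)) t :=
    ((hf.differentiable one_ne_zero _).hasFDerivAt).comp_hasDerivAt t (hseg t)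
  have hcont : Continuous fun t : ℝ => fderiv ℝ f (a + t • (b - a)) (b - a) :=
    ((hf.continuous_fderiv one_ne_zero).comp (by fun_prop)).clm_apply continuous_const
  rw [intervalIntegral.integral_eq_sub_of_hasDerivAt (fun t _ => hderiv t)
    (hcont.intervalIntegrable 0 1)]
  simp

theorem deriv_arccos_comp_pos {g : ℝ → ℝ} {g' x : ℝ} (hg : HasDerivAt g g' x) (hg' : g' < 0)
    (hx : g x ∈ Ioo (-1) 1) : 0 < deriv (fun s => arccos (g s)) x := by
  have h : HasDerivAt (fun s => arccos (g s)) (-(1 / √(1 - g x ^ 2)) * g') x :=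
    (hasDerivAt_arccos hx.1.ne' hx.2.ne).comp x hg
  rw [h.deriv]
  have : 0 < √(1 - g x ^ 2) := sqrt_pos.2 (by nlinarith [hx.1, hx.2])
  have : 0 < 1 / √(1 - g x ^ 2) := by positivity
  nlinarith

theorem sigmoid_eq_exp_div (x : ℝ) : sigmoid x = exp x / (1 + exp x) := by
  rw [sigmoid_def, exp_neg]
  field_simp
  ring

theorem ThetaP_eq_arccos (p : ℝ × ℝ) :
    ThetaP p = arccos (1 - 2 * sigmoid p.1 * sigmoid p.2) := by
  rw [ThetaP, sigmoid_eq_exp_div, sigmoid_eq_exp_div]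
  have := exp_pos p.1
  have := exp_pos p.2
  congr 1
  field_simp
  ring

theorem one_sub_two_mul_sigmoid_mul_sigmoid_mem_Ioo (x y : ℝ) :
    1 - 2 * sigmoid x * sigmoid y ∈ Ioo (-1) 1 := by
  have hx := sigmoid_pos x
  have hy := sigmoid_pos y
  have hx1 := sigmoid_lt_one x
  have hy1 := sigmoid_lt_one y
  constructor <;> nlinarith [mul_pos hx hy, mul_lt_mul'' hx1 hy1 hx.le hy.le]

theorem ThetaP_swap (x y : ℝ) : ThetaP (x, y) = ThetaP (y, x) := by
  simp only [ThetaP_eq_arccos, mul_right_comm]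

theorem contDiff_ThetaP {n : WithTop ℕ∞} : ContDiff ℝ n ThetaP := by
  have hq : ContDiff ℝ n fun p : ℝ × ℝ => 1 - 2 * sigmoid p.1 * sigmoid p.2 := by
    have := contDiff_sigmoid.of_le (le_top (a := n))
    fun_prop
  rw [funext ThetaP_eq_arccos, contDiff_iff_contDiffAt]
  intro p
  have hp := one_sub_two_mul_sigmoid_mul_sigmoid_mem_Ioo p.1 p.2
  exact (contDiffAt_arccos hp.1.ne' hp.2.ne).comp
    (f := fun p : ℝ × ℝ => 1 - 2 * sigmoid p.1 * sigmoid p.2) p hq.contDiffAt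

theorem deriv_ThetaP_fst_pos (x y : ℝ) : 0 < deriv (fun s => ThetaP (s, y)) x := by
  have hg : HasDerivAt (fun s => 1 - 2 * sigmoid s * sigmoid y)
      (-(2 * (sigmoid x * (1 - sigmoid x)) * sigmoid y)) x := by
    simpa using (((hasDerivAt_sigmoid x).const_mul 2).mul_const (sigmoid y)).const_sub 1
  have hg' : -(2 * (sigmoid x * (1 - sigmoid x)) * sigmoid y) < 0 := by
    have := sub_pos.2 (sigmoid_lt_one x)
    have := sigmoid_pos x
    have := sigmoid_pos y
    simp only [neg_lt_zero]
    positivity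
  simp only [ThetaP_eq_arccos]
  exact deriv_arccos_comp_pos hg hg' (one_sub_two_mul_sigmoid_mul_sigmoid_mem_Ioo x y)

theorem deriv_ThetaP_snd_pos (x y : ℝ) : 0 < deriv (fun s => ThetaP (x, s)) y := by
  simpa only [ThetaP_swap x] using deriv_ThetaP_fst_pos y x

theorem stmt_10 :
    (∀ p : ℝ × ℝ, 0 < deriv (fun s => ThetaP (s, p.2)) p.1 ∧
        0 < deriv (fun s => ThetaP (p.1, s)) p.2) ∧
    (∀ a b : ℝ × ℝ,
        ThetaP b - ThetaP a = ∫ t in (0:ℝ)..1, fderiv ℝ ThetaP (a + t • (b - a)) (b - a)) ∧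
    (∀ x2 : ℝ, StrictMono fun x1 => ThetaP (x1, x2)) ∧
    (∀ x1 : ℝ, StrictMono fun x2 => ThetaP (x1, x2)) :=
  ⟨fun p => ⟨deriv_ThetaP_fst_pos p.1 p.2, deriv_ThetaP_snd_pos p.1 p.2⟩,
    contDiff_ThetaP.sub_eq_integral_fderiv_segment,
    fun y => strictMono_of_deriv_pos fun x => deriv_ThetaP_fst_pos x y,
    fun x => strictMono_of_deriv_pos fun y => deriv_ThetaP_snd_pos x y⟩
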